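/- Let μ ≥ 2σ > 0 and ε = σ/(μ√(2π)). Then −μ²/(2σ²) + ((1−ε)/ε)·log(1/(1−ε)) ≤ −μ²/(4σ²). -/

import Mathlib

/-!
Since `log (1 / (1 - ε)) ≤ ε / (1 - ε)`, the logarithmic term is at most `1` for every
`ε ∈ (0, 1)`; and `μ ≥ 2σ` gives `μ² / (4σ²) ≥ 1`, which absorbs it.
-/

open Real

theorem one_sub_div_mul_log_one_div_one_sub_le_one {ε : ℝ} (hε₀ : 0 < ε) (hε₁ : ε < 1) :
    (1 - ε) / ε * log (1 / (1 - ε)) ≤ 1 := by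
  have hpos : 0 < 1 - ε := by linarith
  calc (1 - ε) / ε * log (1 / (1 - ε))
      ≤ (1 - ε) / ε * (1 / (1 - ε) - 1) := by
        gcongr
        exact log_le_sub_one_of_pos (by positivity)
    _ = 1 := by field_simp; ring

theorem one_lt_sqrt_two_mul_pi : 1 < √(2 * π) := by
  rw [lt_sqrt zero_le_one]
  linarith [pi_gt_three]

theorem div_mul_sqrt_two_mul_pi_lt_one {μ σ : ℝ} (hσ : 0 < σ) (hμ : σ < μ) :
    σ / (μ * √(2 * π)) < 1 := by
  rw [div_lt_one (by nlinarith [one_lt_sqrt_two_mul_pi])]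
  nlinarith [one_lt_sqrt_two_mul_pi]

theorem neg_sq_div_two_mul_sq_add_one_le {μ σ : ℝ} (hσ : 0 < σ) (hμ : 2 * σ ≤ μ) :
    -μ ^ 2 / (2 * σ ^ 2) + 1 ≤ -μ ^ 2 / (4 * σ ^ 2) := by
  have h : 4 * σ ^ 2 ≤ μ ^ 2 := by nlinarith
  rw [div_add_one (by positivity), div_le_div_iff₀ (by positivity) (by positivity)]
  nlinarith

theorem stmt_5 (μ σ : ℝ) (hσ : 0 < σ) (hμ : 2 * σ ≤ μ)
    (ε : ℝ) (hε : ε = σ / (μ * Real.sqrt (2 * Real.pi))) :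
    -μ ^ 2 / (2 * σ ^ 2) + ((1 - ε) / ε) * Real.log (1 / (1 - ε)) ≤ -μ ^ 2 / (4 * σ ^ 2) := by
  have hμ₀ : 0 < μ := by linarith
  have hε₀ : 0 < ε := by rw [hε]; positivity
  have hε₁ : ε < 1 := hε ▸ div_mul_sqrt_two_mul_pi_lt_one hσ (by linarith)
  linarith [one_sub_div_mul_log_one_div_one_sub_le_one hε₀ hε₁,
    neg_sq_div_two_mul_sq_add_one_le hσ hμ]
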